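/- A word w is sortable by a stack of depth k if and only if w avoids the pattern 120 and the strictly decreasing pattern k(k-1)...10 of length k+1. -/

import Mathlib

def Contains120 (w : List ℕ) : Prop :=
  ∃ i j k, i < j ∧ j < k ∧ k < w.length ∧ w.getD k 0 < w.getD i 0 ∧ w.getD i 0 < w.getD j 0

def Contains201 (w : List ℕ) : Prop :=
  ∃ i j k, i < j ∧ j < k ∧ k < w.length ∧ w.getD j 0 < w.getD k 0 ∧ w.getD k 0 < w.getD i 0

def Contains210 (w : List ℕ) : Prop :=
  ∃ i j k, i < j ∧ j < k ∧ k < w.length ∧ w.getD k 0 < w.getD j 0 ∧ w.getD j 0 < w.getD i 0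

def Contains1010 (w : List ℕ) : Prop :=
  ∃ i j k l, i < j ∧ j < k ∧ k < l ∧ l < w.length ∧
    w.getD j 0 = w.getD l 0 ∧ w.getD l 0 < w.getD i 0 ∧ w.getD i 0 = w.getD k 0

/-- w has a strictly decreasing subsequence of length m, i.e. contains the pattern
(m-1)(m-2)...10. -/
def ContainsDec (m : ℕ) (w : List ℕ) : Prop :=
  ∃ s : Fin m → ℕ, StrictMono s ∧ (∀ a, s a < w.length) ∧
    ∀ a b : Fin m, a < b → w.getD (s b) 0 < w.getD (s a) 0

/-- One step of a stack of depth k, acting on states (input, stack, output): one may push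
the next input letter on top of the stack provided the stack stays weakly decreasing from
the top and contains at most k distinct values, or pop the top entry to the output. -/
inductive StackStep (k : ℕ) : List ℕ × List ℕ × List ℕ → List ℕ × List ℕ × List ℕ → Prop
  | push (x : ℕ) (xs st out : List ℕ) :
      (st = [] ∨ x ≤ st.headI) → (x :: st).dedup.length ≤ k →
      StackStep k (x :: xs, st, out) (xs, x :: st, out)
  | pop (xs : List ℕ) (t : ℕ) (st out : List ℕ) :
      StackStep k (xs, t :: st, out) (xs, st, out ++ [t])

/-- w is sortable by a stack of depth k: some sequence of legal operations consumes the
input and produces a weakly increasing output. -/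
def StackSortableDepth (k : ℕ) (w : List ℕ) : Prop :=
  ∃ out : List ℕ, Relation.ReflTransGen (StackStep k) (w, [], []) ([], [], out) ∧
    List.Pairwise (· ≤ ·) out

/-! When a letter `x` is pushed, every earlier letter exceeding some letter from `x` on must still
be on the stack, because the output is sorted. For an occurrence `bca` of 120 this puts `b` on the
stack under `c > b`; for a strictly decreasing subsequence of length `k + 1` it puts `k + 1`
distinct values on the stack when its last letter is pushed.

Conversely, the greedy algorithm (push whenever the stack stays sorted, otherwise pop) succeeds on
a word avoiding both patterns: the stack read bottom to top is a weakly decreasing subword, so it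
never holds more than `k` distinct values, and popping a top `t` below the next letter `x` is safe
since a later letter below `t` would form 120 with `t` and `x`. -/
open scoped List

theorem contains120_iff_exists_sublist {w : List ℕ} :
    Contains120 w ↔ ∃ a b c, a < b ∧ b < c ∧ [b, c, a] <+ w := by
  constructor
  · rintro ⟨i, j, l, hij, hjl, hl, hli, hij'⟩
    have hj := hjl.trans hl
    have hi := hij.trans hj
    refine ⟨w[l], w[i], w[j], by simpa [hl, hi] using hli, by simpa [hj, hi] using hij', ?_⟩
    simpa using List.map_getElem_sublist (is := [⟨i, hi⟩, ⟨j, hj⟩, ⟨l, hl⟩])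
      (by simp [hij, hjl, hij.trans hjl])
  · rintro ⟨a, b, c, hab, hbc, h⟩
    obtain ⟨is, his, hlt⟩ := List.sublist_eq_map_getElem h
    rcases is with _ | ⟨i, _ | ⟨j, _ | ⟨l, _ | _⟩⟩⟩ <;> simp at his
    obtain ⟨rfl, rfl, rfl⟩ := his
    simp only [List.pairwise_cons, List.mem_cons, forall_eq_or_imp] at hlt
    refine ⟨i, j, l, hlt.1.1, hlt.2.1.1, l.isLt, ?_, ?_⟩ <;> simpa

theorem containsDec_iff_exists_sublist {m : ℕ} {w : List ℕ} :
    ContainsDec m w ↔ ∃ d, d <+ w ∧ d.length = m ∧ d.Pairwise (· > ·) := by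
  constructor
  · rintro ⟨s, hs, hlt, hdec⟩
    refine ⟨(List.ofFn fun a => (⟨s a, hlt a⟩ : Fin w.length)).map (w[·]),
      List.map_getElem_sublist (List.pairwise_ofFn.mpr fun _ _ h => hs h), by simp, ?_⟩
    simpa [List.pairwise_map, List.pairwise_ofFn, List.getD_eq_getElem, hlt] using hdec
  · rintro ⟨d, hd, rfl, hdec⟩
    obtain ⟨is, rfl, hlt⟩ := List.sublist_eq_map_getElem hd
    have hlen (a : Fin (is.map (w[·])).length) : (a : ℕ) < is.length := by simpa using a.isLt
    refine ⟨fun a => is[(a : ℕ)]'(hlen a), fun a b hab => ?_, fun a => by simp, fun a b hab => ?_⟩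
    · exact List.pairwise_iff_getElem.mp hlt _ _ _ _ hab
    · simpa using List.pairwise_iff_getElem.mp hdec _ _ (by simpa using hlen a)
        (by simpa using hlen b) hab

theorem Contains120.of_sublist {l l' : List ℕ} (hl : l <+ l') (h : Contains120 l) :
    Contains120 l' :=
  have ⟨a, b, c, hab, hbc, hsub⟩ := contains120_iff_exists_sublist.mp h
  contains120_iff_exists_sublist.mpr ⟨a, b, c, hab, hbc, hsub.trans hl⟩

theorem ContainsDec.of_sublist {m : ℕ} {l l' : List ℕ} (hl : l <+ l') (h : ContainsDec m l) :
    ContainsDec m l' :=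
  have ⟨d, hd, hlen, hdec⟩ := containsDec_iff_exists_sublist.mp h
  containsDec_iff_exists_sublist.mpr ⟨d, hd.trans hl, hlen, hdec⟩

theorem exists_append_cons_of_sublist {α : Type*} {l₁ l₂ w : List α} {x : α}
    (h : l₁ ++ x :: l₂ <+ w) : ∃ u v, w = u ++ x :: v ∧ l₁ <+ u ∧ l₂ <+ v := by
  obtain ⟨r₁, r₂, rfl, h₁, h₂⟩ := List.append_sublist_iff.mp h
  obtain ⟨s₁, s₂, rfl, hx, h₃⟩ := List.cons_sublist_iff.mp h₂
  obtain ⟨p, q, rfl⟩ := List.append_of_mem hx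
  exact ⟨r₁ ++ p, q ++ s₂, by simp, h₁.trans (List.sublist_append_left _ _),
    h₃.trans (List.sublist_append_right _ _)⟩

theorem pairwise_le_cons_of_le_headI {x : ℕ} {st : List ℕ} (hst : st.Pairwise (· ≤ ·))
    (hx : st = [] ∨ x ≤ st.headI) : (x :: st).Pairwise (· ≤ ·) := by
  cases st with
  | nil => simp
  | cons t st =>
    simp only [reduceCtorEq, List.headI_cons, false_or] at hx
    exact hst.cons (List.forall_mem_cons.mpr
      ⟨hx, fun b hb => hx.trans (List.rel_of_pairwise_cons hst hb)⟩)

theorem containsDec_of_pairwise_ge {m : ℕ} {l : List ℕ} (hl : l.Pairwise (· ≥ ·))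
    (hm : m ≤ l.dedup.length) : ContainsDec m l := by
  have hdec : l.dedup.Pairwise (· > ·) :=
    ((hl.sublist l.dedup_sublist).and l.nodup_dedup).imp fun h => lt_of_le_of_ne h.1 (Ne.symm h.2)
  exact containsDec_iff_exists_sublist.mpr ⟨l.dedup.take m,
    (l.dedup.take_sublist m).trans l.dedup_sublist, by simpa using hm,
    hdec.sublist (l.dedup.take_sublist m)⟩

namespace StackStep

variable {k : ℕ}

theorem stack_sorted {s s' : List ℕ × List ℕ × List ℕ}
    (h : Relation.ReflTransGen (StackStep k) s s') (hs : s.2.1.Pairwise (· ≤ ·)) :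
    s'.2.1.Pairwise (· ≤ ·) := by
  induction h with
  | refl => exact hs
  | tail _ step ih =>
    cases step with
    | push x xs st out hx _ => exact pairwise_le_cons_of_le_headI ih hx
    | pop => exact ih.of_cons

theorem exists_consumed_perm_emitted {s s' : List ℕ × List ℕ × List ℕ}
    (h : Relation.ReflTransGen (StackStep k) s s') :
    ∃ u r, s.1 = u ++ s'.1 ∧ s'.2.2 = s.2.2 ++ r ∧ (u ++ s.2.1).Perm (s'.2.1 ++ r) := by
  induction h with
  | refl => exact ⟨[], [], by simp, by simp, by simp⟩
  | tail _ step ih =>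
    obtain ⟨u, r, hu, hr, hp⟩ := ih
    cases step with
    | push x xs st out =>
      refine ⟨u ++ [x], r, by simpa using hu, hr, ?_⟩
      simpa using List.perm_middle.trans (hp.cons x)
    | pop xs t st out =>
      dsimp only at hr
      refine ⟨u, r ++ [t], hu, by rw [hr, List.append_assoc], hp.trans ?_⟩
      simpa using (List.perm_append_comm (l₁ := st ++ r) (l₂ := [t])).symm

theorem exists_push_of_reaches {u v st o out : List ℕ} {x : ℕ}
    (h : Relation.ReflTransGen (StackStep k) (u ++ x :: v, st, o) ([], [], out)) :
    ∃ st' o', Relation.ReflTransGen (StackStep k) (u ++ x :: v, st, o) (x :: v, st', o') ∧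
      (st' = [] ∨ x ≤ st'.headI) ∧ (x :: st').dedup.length ≤ k ∧
      Relation.ReflTransGen (StackStep k) (v, x :: st', o') ([], [], out) := by
  generalize hs : (u ++ x :: v, st, o) = s at h
  induction h using Relation.ReflTransGen.head_induction_on generalizing u st o with
  | refl => simp at hs
  | head step rest ih =>
    cases step with
    | push y xs st₁ o₁ hy hd =>
      simp only [Prod.mk.injEq] at hs
      obtain ⟨hu, rfl, rfl⟩ := hs
      cases u with
      | nil =>
        simp only [List.nil_append, List.cons.injEq] at hu
        obtain ⟨rfl, rfl⟩ := hu
        exact ⟨st, o, .refl, hy, hd, rest⟩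
      | cons z u =>
        simp only [List.cons_append, List.cons.injEq] at hu
        obtain ⟨rfl, rfl⟩ := hu
        obtain ⟨st', o', h₁, h₂⟩ := ih (u := u) rfl
        exact ⟨st', o', .head (.push _ _ _ _ hy hd) h₁, h₂⟩
    | pop xs t st₁ o₁ =>
      simp only [Prod.mk.injEq] at hs
      obtain ⟨rfl, rfl, rfl⟩ := hs
      obtain ⟨st', o', h₁, h₂⟩ := ih rfl
      exact ⟨st', o', .head (.pop _ _ _ _) h₁, h₂⟩

theorem exists_stack_at_push {u v out : List ℕ} {x : ℕ}
    (h : Relation.ReflTransGen (StackStep k) (u ++ x :: v, [], []) ([], [], out))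
    (hout : out.Pairwise (· ≤ ·)) :
    ∃ st, (x :: st).Pairwise (· ≤ ·) ∧ (x :: st).dedup.length ≤ k ∧
      ∀ y ∈ u, ∀ z ∈ x :: v, z < y → y ∈ st := by
  obtain ⟨st, o, hbefore, hx, hdepth, hafter⟩ := exists_push_of_reaches h
  refine ⟨st, pairwise_le_cons_of_le_headI (stack_sorted hbefore List.Pairwise.nil) hx, hdepth,
    fun y hy z hz hzy => ?_⟩
  obtain ⟨u', o', hu, ho, hperm⟩ := exists_consumed_perm_emitted hbefore
  obtain ⟨u'', r, hu', hr, hperm'⟩ :=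
    exists_consumed_perm_emitted (hafter.head (.push x v st o hx hdepth))
  simp only [List.append_cancel_right_eq, List.nil_append, List.append_nil] at hu hu' ho hr hperm
  subst hu hu' ho
  -- a letter already output precedes all later output, in particular `z`
  rcases List.mem_append.mp (hperm.subset hy) with hy | hy
  · exact hy
  · rw [hr] at hout
    exact absurd (List.pairwise_append.mp hout |>.2.2 y hy z
      (hperm'.subset (List.mem_append_left _ hz))) (not_le.mpr hzy)

end StackStep

theorem not_contains120_of_stackSortableDepth {k : ℕ} {w : List ℕ}
    (h : StackSortableDepth k w) : ¬ Contains120 w := by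
  rw [contains120_iff_exists_sublist]
  rintro ⟨a, b, c, hab, hbc, hsub⟩
  obtain ⟨u, v, rfl, hb, ha⟩ := exists_append_cons_of_sublist (l₁ := [b]) (l₂ := [a]) hsub
  obtain ⟨out, hrun, hout⟩ := h
  obtain ⟨st, hsorted, -, hst⟩ := StackStep.exists_stack_at_push hrun hout
  have hb_st : b ∈ st := hst b (List.singleton_sublist.mp hb) a
    (List.mem_cons_of_mem _ (List.singleton_sublist.mp ha)) hab
  exact absurd (List.rel_of_pairwise_cons hsorted hb_st) (not_le.mpr hbc)

theorem not_containsDec_of_stackSortableDepth {k : ℕ} {w : List ℕ}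
    (h : StackSortableDepth k w) : ¬ ContainsDec (k + 1) w := by
  rw [containsDec_iff_exists_sublist]
  rintro ⟨d, hsub, hlen, hdec⟩
  obtain ⟨d, x, rfl⟩ : ∃ d' x, d = d' ++ [x] :=
    ⟨d.dropLast, d.getLast (List.ne_nil_of_length_eq_add_one hlen),
      (List.dropLast_append_getLast _).symm⟩
  obtain ⟨u, v, rfl, hd, -⟩ := exists_append_cons_of_sublist hsub
  obtain ⟨out, hrun, hout⟩ := h
  obtain ⟨st, -, hdepth, hst⟩ := StackStep.exists_stack_at_push hrun hout
  have hsubset : d ++ [x] ⊆ (x :: st).dedup := by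
    intro y hy
    rw [List.mem_dedup]
    rcases List.mem_append.mp hy with hy | hy
    · exact List.mem_cons_of_mem _ (hst y (hd.subset hy) x List.mem_cons_self
        (List.pairwise_append.mp hdec |>.2.2 y hy x List.mem_cons_self))
    · exact List.mem_singleton.mp hy ▸ List.mem_cons_self
  have hnodup : (d ++ [x]).Nodup := hdec.imp ne_of_gt
  have := hnodup.length_le_of_subset hsubset
  omega

/-- The stack `st` is listed top first, so `st.reverse ++ xs` is what remains of the input word
after removing the output `o`. -/
structure GreedyInv (k : ℕ) (xs st o : List ℕ) : Prop where
  stack_sorted : st.Pairwise (· ≤ ·)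
  output_sorted : o.Pairwise (· ≤ ·)
  output_le : ∀ a ∈ o, ∀ b ∈ st ++ xs, a ≤ b
  not_contains120 : ¬ Contains120 (st.reverse ++ xs)
  not_containsDec : ¬ ContainsDec (k + 1) (st.reverse ++ xs)

namespace GreedyInv

variable {k : ℕ} {xs st o : List ℕ}

theorem push {x : ℕ} (h : GreedyInv k (x :: xs) st o) (hx : st = [] ∨ x ≤ st.headI) :
    GreedyInv k xs (x :: st) o where
  stack_sorted := pairwise_le_cons_of_le_headI h.stack_sorted hx
  output_sorted := h.output_sorted
  output_le a ha b hb := h.output_le a ha b <| by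
    simp only [List.mem_append, List.mem_cons] at hb ⊢
    tauto
  not_contains120 := by simpa using h.not_contains120
  not_containsDec := by simpa using h.not_containsDec

theorem pop {t : ℕ} (h : GreedyInv k xs (t :: st) o) (ht : ∀ b ∈ xs, t ≤ b) :
    GreedyInv k xs st (o ++ [t]) := by
  have hsub : st.reverse ++ xs <+ (t :: st).reverse ++ xs := by simp
  refine ⟨h.stack_sorted.of_cons, ?_, fun a ha b hb => ?_, ?_, ?_⟩
  · exact List.pairwise_append.mpr ⟨h.output_sorted, by simp, fun a ha b hb =>
      List.mem_singleton.mp hb ▸ h.output_le a ha t List.mem_cons_self⟩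
  · have htb : t ≤ b := by
      rcases List.mem_append.mp hb with hb | hb
      · exact List.rel_of_pairwise_cons h.stack_sorted hb
      · exact ht b hb
    rcases List.mem_append.mp ha with ha | ha
    · exact h.output_le a ha b (List.mem_cons_of_mem t hb)
    · exact List.mem_singleton.mp ha ▸ htb
  · exact fun hc => h.not_contains120 (hc.of_sublist hsub)
  · exact fun hc => h.not_containsDec (hc.of_sublist hsub)

theorem dedup_length_le (h : GreedyInv k xs st o) : st.dedup.length ≤ k := by
  by_contra! hlt
  refine h.not_containsDec (ContainsDec.of_sublist (List.sublist_append_left _ _) ?_)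
  refine containsDec_of_pairwise_ge (List.pairwise_reverse.mpr h.stack_sorted) ?_
  rwa [← List.card_toFinset, List.toFinset_reverse, List.card_toFinset]

theorem top_le_input_of_lt {x t : ℕ} (h : GreedyInv k (x :: xs) (t :: st) o) (hx : t < x) :
    ∀ b ∈ x :: xs, t ≤ b := by
  rintro b (_ | ⟨_, hb⟩)
  · exact hx.le
  · by_contra! hbt
    refine h.not_contains120 (contains120_iff_exists_sublist.mpr ⟨b, t, x, hbt, hx, ?_⟩)
    exact (by simp : [t] <+ (t :: st).reverse).append
      (List.cons_sublist_cons.mpr (List.singleton_sublist.mpr hb))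

theorem reaches_sorted : ∀ {xs st o : List ℕ}, GreedyInv k xs st o →
    ∃ out, Relation.ReflTransGen (StackStep k) (xs, st, o) ([], [], out) ∧
      out.Pairwise (· ≤ ·)
  | [], [], o, h => ⟨o, .refl, h.output_sorted⟩
  | [], t :: st, o, h =>
    have ⟨out, hrun, hout⟩ := reaches_sorted (h.pop (by simp))
    ⟨out, .head (.pop _ _ _ _) hrun, hout⟩
  | x :: xs, st, o, h =>
    if hx : st = [] ∨ x ≤ st.headI then
      have ⟨out, hrun, hout⟩ := reaches_sorted (h.push hx)
      ⟨out, .head (.push _ _ _ _ hx (h.push hx).dedup_length_le) hrun, hout⟩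
    else
      match st, hx with
      | [], hx => absurd (Or.inl rfl) hx
      | t :: st, hx =>
        have ⟨out, hrun, hout⟩ := reaches_sorted (h.pop (h.top_le_input_of_lt (by simpa using hx)))
        ⟨out, .head (.pop _ _ _ _) hrun, hout⟩
termination_by xs st => 2 * xs.length + st.length

end GreedyInv

theorem stackSortableDepth_of_not_contains {k : ℕ} {w : List ℕ} (h120 : ¬ Contains120 w)
    (hdec : ¬ ContainsDec (k + 1) w) : StackSortableDepth k w :=
  GreedyInv.reaches_sorted ⟨.nil, .nil, by simp, by simpa using h120, by simpa using hdec⟩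

/-- A word is sortable by a stack of depth k iff it avoids 120 and the strictly
decreasing pattern k(k-1)...10 of length k+1. -/
theorem stack_depth_sortable_iff (k : ℕ) (w : List ℕ) :
    StackSortableDepth k w ↔ ¬ Contains120 w ∧ ¬ ContainsDec (k + 1) w :=
  ⟨fun h => ⟨not_contains120_of_stackSortableDepth h, not_containsDec_of_stackSortableDepth h⟩,
    fun h => stackSortableDepth_of_not_contains h.1 h.2⟩
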